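/- arXiv:0710.3327 — 4 statements merged into one kernel-verified Lean document; each statement's English description precedes it below -/
import Mathlib

section
/- Let c₁, c₂, c₃ ∈ ℂ³ be vectors of positive norm forming a basis, with respect to a Hermitian form h of signature (2,1). Define φᵢⱼ = |h(cᵢ,cⱼ)|² / (h(cᵢ,cᵢ)h(cⱼ,cⱼ)) and Φ₁₂₃ = h(c₁,c₂)h(c₂,c₃)h(c₃,c₁) / (h(c₁,c₁)h(c₂,c₂)h(c₃,c₃)). Then 1 − φ₁₂ − φ₂₃ − φ₃₁ + Φ₁₂₃ + conj(Φ₁₂₃) < 0 (as a real number). -/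
/-!
The Gram matrix `G = C H Cᴴ` of `c₁, c₂, c₃` (the rows of `C`) is congruent to `H`, so
`det G = |det C|² det H`, and `det H < 0` because `H` is congruent to `diag(1, 1, -1)`.
Expanding the Hermitian `3 × 3` determinant, the left-hand side is exactly
`det G / (h(c₁,c₁) h(c₂,c₂) h(c₃,c₃))`, a negative number over a positive one.
-/

open Matrix Complex

noncomputable def herm (H : Matrix (Fin 3) (Fin 3) ℂ) (v w : Fin 3 → ℂ) : ℂ :=
  ∑ i, ∑ j, v i * H i j * (starRingEnd ℂ) (w j)

lemma mul_mul_conjTranspose_apply_eq_herm (C H : Matrix (Fin 3) (Fin 3) ℂ) (i j : Fin 3) :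
    (C * H * Cᴴ) i j = herm H (C i) (C j) := by
  simp only [herm, mul_apply, conjTranspose_apply, Finset.sum_mul, starRingEnd_apply]
  rw [Finset.sum_comm]

open ComplexConjugate in
lemma conj_herm {H : Matrix (Fin 3) (Fin 3) ℂ} (hH : Hᴴ = H) (v w : Fin 3 → ℂ) :
    conj (herm H v w) = herm H w v := by
  simp only [herm, map_sum, map_mul, conj_conj]
  rw [Finset.sum_comm]
  refine Finset.sum_congr rfl fun j _ => Finset.sum_congr rfl fun i _ => ?_
  rw [← congrFun₂ hH j i, conjTranspose_apply, star_def]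
  ring

section

variable {n : Type*} [Fintype n] [DecidableEq n]

lemma det_mul_mul_conjTranspose (C H : Matrix n n ℂ) :
    (C * H * Cᴴ).det = normSq C.det * H.det := by
  rw [det_mul, det_mul, det_conjTranspose, normSq_eq_conj_mul_self, starRingEnd_apply]
  ring

lemma det_eq_neg_real_of_det_conjTranspose_mul_mul_eq_neg_one {H P : Matrix n n ℂ}
    (hP : (Pᴴ * H * P).det = -1) : ∃ r : ℝ, r < 0 ∧ H.det = r := by
  rw [← conjTranspose_conjTranspose P, conjTranspose_conjTranspose Pᴴ,
    det_mul_mul_conjTranspose, det_conjTranspose, star_def, normSq_conj] at hP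
  have hnorm : normSq P.det ≠ 0 := by
    intro h
    simp [h] at hP
  refine ⟨-(normSq P.det)⁻¹, neg_lt_zero.mpr (inv_pos.mpr ?_), ?_⟩
  · exact lt_of_le_of_ne (normSq_nonneg _) (Ne.symm hnorm)
  · have hnorm' : (normSq P.det : ℂ) ≠ 0 := by exact_mod_cast hnorm
    push_cast
    rw [eq_neg_iff_add_eq_zero]
    field_simp
    linear_combination hP

lemma re_det_mul_mul_conjTranspose_neg {H C : Matrix n n ℂ} {r : ℝ} (hr : r < 0)
    (hH : H.det = r) (hC : C.det ≠ 0) : (C * H * Cᴴ).det.re < 0 := by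
  rw [det_mul_mul_conjTranspose, hH, ← ofReal_mul, ofReal_re]
  exact mul_neg_of_pos_of_neg (normSq_pos.mpr hC) hr

end

lemma Matrix.IsHermitian.re_det_fin_three {G : Matrix (Fin 3) (Fin 3) ℂ} (hG : G.IsHermitian) :
    G.det.re = (G 0 0).re * (G 1 1).re * (G 2 2).re - (G 0 0).re * normSq (G 1 2)
      - (G 1 1).re * normSq (G 2 0) - (G 2 2).re * normSq (G 0 1)
      + 2 * (G 0 1 * G 1 2 * G 2 0).re := by
  have hdiag (i : Fin 3) : (G i i).im = 0 := conj_eq_iff_im.mp (hG.apply i i)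
  rw [det_fin_three, ← hG.apply 1 0, ← hG.apply 2 1, ← hG.apply 0 2]
  simp only [add_re, sub_re, mul_re, mul_im, star_def, conj_re, conj_im, normSq_apply, hdiag]
  ring

/-- For a Hermitian form of signature (2,1) and three positive vectors forming a basis,
the Gram-type inequality 1 − φ₁₂ − φ₂₃ − φ₃₁ + Φ₁₂₃ + conj Φ₁₂₃ < 0 holds. -/
theorem stmt1 (H : Matrix (Fin 3) (Fin 3) ℂ) (hH : Hᴴ = H)
    (hsig : ∃ P : Matrix (Fin 3) (Fin 3) ℂ, IsUnit P.det ∧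
      Pᴴ * H * P = Matrix.diagonal ![1, 1, -1])
    (c₁ c₂ c₃ : Fin 3 → ℂ)
    (hbasis : LinearIndependent ℂ ![c₁, c₂, c₃])
    (h1 : 0 < (herm H c₁ c₁).re) (h2 : 0 < (herm H c₂ c₂).re)
    (h3 : 0 < (herm H c₃ c₃).re) :
    (1 : ℝ)
      - Complex.normSq (herm H c₁ c₂) / ((herm H c₁ c₁).re * (herm H c₂ c₂).re)
      - Complex.normSq (herm H c₂ c₃) / ((herm H c₂ c₂).re * (herm H c₃ c₃).re)
      - Complex.normSq (herm H c₃ c₁) / ((herm H c₃ c₃).re * (herm H c₁ c₁).re)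
      + 2 * (herm H c₁ c₂ * herm H c₂ c₃ * herm H c₃ c₁ /
          (herm H c₁ c₁ * herm H c₂ c₂ * herm H c₃ c₃)).re < 0 := by
  obtain ⟨P, -, hP⟩ := hsig
  obtain ⟨r, hr, hdetH⟩ :=
    det_eq_neg_real_of_det_conjTranspose_mul_mul_eq_neg_one (H := H) (P := P)
      (by simp [hP, Fin.prod_univ_three])
  set C := of ![c₁, c₂, c₃]
  have hC : C.det ≠ 0 :=
    ((isUnit_iff_isUnit_det C).mp (linearIndependent_rows_iff_isUnit.mp hbasis)).ne_zero
  have hgram := (isHermitian_mul_mul_conjTranspose C hH).re_det_fin_three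
  obtain ⟨hC₁, hC₂, hC₃⟩ : C 0 = c₁ ∧ C 1 = c₂ ∧ C 2 = c₃ := ⟨rfl, rfl, rfl⟩
  simp only [mul_mul_conjTranspose_apply_eq_herm, hC₁, hC₂, hC₃] at hgram
  have hreal (v : Fin 3 → ℂ) : ((herm H v v).re : ℂ) = herm H v v :=
    conj_eq_iff_re.mp (conj_herm hH v v)
  rw [← hreal c₁, ← hreal c₂, ← hreal c₃, ← ofReal_mul, ← ofReal_mul, div_ofReal_re]
  simp only [ofReal_re]
  refine neg_of_mul_neg_right (a := (herm H c₁ c₁).re * (herm H c₂ c₂).re * (herm H c₃ c₃).re)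
    ?_ (by positivity)
  calc _ = (C * H * Cᴴ).det.re := by rw [hgram]; field_simp; ring
    _ < 0 := re_det_mul_mul_conjTranspose_neg hr hdetH hC
end

section
/- Let h be a Hermitian form of signature (2,1) on ℂ³, c₁,c₂,c₃ a basis of positive-norm vectors normalized to norm 1, (d₁,d₂,d₃) the anti-dual basis, and p₁ = a·d₂ + b·d₃ with b ≠ 0 an isotropic vector (h(p₁,p₁) = 0). Set δ = h(c₂,c₃)·a / (h(c₂,c₂)·b). Then (1−φ₁₃)|δ|² + 2·Re((Φ₁₃₂ − φ₂₃)·δ) + φ₂₃(1−φ₁₂) = 0, where φᵢⱼ = |h(cᵢ,cⱼ)|² and Φ₁₃₂ = h(c₁,c₃)h(c₃,c₂)h(c₂,c₁). -/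
/-!
With `C`, `D` the matrices whose rows are the `cᵢ`, `dᵢ`, anti-duality reads `D H Cᴴ = 1`, so the
Gram matrix `D H Dᴴ` of the `dᵢ` is the inverse of the Gram matrix `G = C H Cᴴ` of the `cᵢ`.
Since `p₁ = (0, a, b) D`, isotropy of `p₁` is isotropy of `(0, a, b)` for `G⁻¹`, hence for `adj G`.
Expanding `adj G` for a Gram matrix with unit diagonal and dividing by `|b|²` gives the circle
equation in `δ`.
-/

open Matrix Complex

open ComplexConjugate

section

variable {n R : Type*} [Fintype n] [DecidableEq n] [CommRing R]

theorem Matrix.mul_mul_conjTranspose_mul_eq_one_of_dual [StarRing R] {H C D : Matrix n n R}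
    (hH : Hᴴ = H) (hDC : D * H * Cᴴ = 1) : C * H * Cᴴ * (D * H * Dᴴ) = 1 := by
  have hCD : Cᴴ * (D * H) = 1 := mul_eq_one_comm.mp hDC
  have hCD' : C * H * Dᴴ = 1 := by
    simpa [conjTranspose_mul, hH, Matrix.mul_assoc] using congrArg conjTranspose hDC
  calc C * H * Cᴴ * (D * H * Dᴴ) = C * H * (Cᴴ * (D * H)) * Dᴴ := by
        simp only [Matrix.mul_assoc]
    _ = 1 := by rw [hCD, Matrix.mul_one, hCD']

theorem Matrix.det_smul_eq_adjugate_of_mul_eq_one {A B : Matrix n n R} (h : A * B = 1) :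
    A.det • B = A.adjugate :=
  calc A.det • B = A.adjugate * A * B := by rw [adjugate_mul, smul_mul, Matrix.one_mul]
    _ = A.adjugate := by rw [Matrix.mul_assoc, h, Matrix.mul_one]

end

theorem herm_eq_dotProduct (H : Matrix (Fin 3) (Fin 3) ℂ) (v w : Fin 3 → ℂ) :
    herm H v w = v ᵥ* H ⬝ᵥ star w := by
  simp only [herm, dotProduct, vecMul, Pi.star_apply, RCLike.star_def, Finset.sum_mul]
  exact Finset.sum_comm

theorem herm_apply_eq_mul_conjTranspose (H : Matrix (Fin 3) (Fin 3) ℂ)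
    (v w : Fin 3 → Fin 3 → ℂ) (i j : Fin 3) :
    herm H (v i) (w j) = (of v * H * (of w)ᴴ) i j := by
  simp [herm_eq_dotProduct, mul_apply, dotProduct, vecMul]

theorem herm_vecMul_vecMul (H D : Matrix (Fin 3) (Fin 3) ℂ) (u w : Fin 3 → ℂ) :
    herm H (u ᵥ* D) (w ᵥ* D) = herm (D * H * Dᴴ) u w := by
  rw [herm_eq_dotProduct, herm_eq_dotProduct, star_vecMul, dotProduct_mulVec, vecMul_vecMul,
    vecMul_vecMul, Matrix.mul_assoc]

theorem herm_smul (k : ℂ) (M : Matrix (Fin 3) (Fin 3) ℂ) (u w : Fin 3 → ℂ) :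
    herm (k • M) u w = k * herm M u w := by
  rw [herm_eq_dotProduct, herm_eq_dotProduct, vecMul_smul, smul_dotProduct, smul_eq_mul]

theorem herm_conj_symm {H : Matrix (Fin 3) (Fin 3) ℂ} (hH : Hᴴ = H) (v w : Fin 3 → ℂ) :
    herm H w v = conj (herm H v w) := by
  rw [herm_eq_dotProduct, herm_eq_dotProduct, dotProduct_star, star_vecMul, hH, dotProduct_mulVec]
  rfl

theorem circle_eq_of_isotropic_adjugate (x y z a b : ℂ) (hb : b ≠ 0)
    (h : herm !![1, x, y; conj x, 1, z; conj y, conj z, 1].adjugate ![0, a, b] ![0, a, b] = 0) :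
    (1 - normSq y) * normSq (z * a / b) +
      2 * ((y * conj z * conj x - (normSq z : ℂ)) * (z * a / b)).re +
      normSq z * (1 - normSq x) = 0 := by
  rw [adjugate_fin_three] at h
  simp only [herm, of_apply, cons_val', cons_val_one, cons_val_zero, cons_val_fin_one, cons_val,
    mul_one, one_mul, Fin.sum_univ_three, map_zero, mul_zero, zero_add, zero_mul, add_zero] at h
  rw [← ofReal_eq_zero]
  simp only [ofReal_add, ofReal_mul, ofReal_sub, ofReal_one, ofReal_ofNat, ← mul_conj,
    re_eq_add_conj]
  simp only [map_div₀, map_mul, map_sub, conj_conj]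
  have hb' : conj b ≠ 0 := by simpa using hb
  field_simp
  linear_combination z * conj z * h

theorem stmt9_general (H : Matrix (Fin 3) (Fin 3) ℂ) (hH : Hᴴ = H)
    (c d : Fin 3 → Fin 3 → ℂ)
    (hunit : ∀ i, herm H (c i) (c i) = 1)
    (hd : ∀ i j, herm H (d i) (c j) = if i = j then 1 else 0)
    (a b : ℂ) (hb : b ≠ 0)
    (p₁ : Fin 3 → ℂ) (hp : p₁ = a • d 1 + b • d 2)
    (hiso : herm H p₁ p₁ = 0) :
    (1 - Complex.normSq (herm H (c 0) (c 2))) *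
        Complex.normSq (herm H (c 1) (c 2) * a / (herm H (c 1) (c 1) * b)) +
      2 * ((herm H (c 0) (c 2) * herm H (c 2) (c 1) * herm H (c 1) (c 0) -
            (Complex.normSq (herm H (c 1) (c 2)) : ℂ)) *
            (herm H (c 1) (c 2) * a / (herm H (c 1) (c 1) * b))).re +
      Complex.normSq (herm H (c 1) (c 2)) *
        (1 - Complex.normSq (herm H (c 0) (c 1))) = 0 := by
  have hGram : of c * H * (of c)ᴴ = !![1, herm H (c 0) (c 1), herm H (c 0) (c 2);
      conj (herm H (c 0) (c 1)), 1, herm H (c 1) (c 2);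
      conj (herm H (c 0) (c 2)), conj (herm H (c 1) (c 2)), 1] := by
    ext i j
    rw [← herm_apply_eq_mul_conjTranspose]
    fin_cases i <;> fin_cases j <;> simp [hunit, herm_conj_symm hH (c 0) (c 1),
      herm_conj_symm hH (c 0) (c 2), herm_conj_symm hH (c 1) (c 2)]
  have hInv : of c * H * (of c)ᴴ * (of d * H * (of d)ᴴ) = 1 :=
    mul_mul_conjTranspose_mul_eq_one_of_dual hH <| by
      ext i j
      rw [← herm_apply_eq_mul_conjTranspose, hd, one_apply]
  have hp' : p₁ = ![0, a, b] ᵥ* of d := by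
    ext k
    simp [hp, vecMul, dotProduct, Fin.sum_univ_three]
  rw [hunit 1, one_mul, herm_conj_symm hH (c 1), herm_conj_symm hH (c 0) (c 1)]
  refine circle_eq_of_isotropic_adjugate _ _ _ a b hb ?_
  rw [← hGram, ← det_smul_eq_adjugate_of_mul_eq_one hInv, herm_smul, ← herm_vecMul_vecMul, ← hp',
    hiso, mul_zero]

/-- The circle equation satisfied by the δ-invariant of a flag relative to two
complex lines: if p₁ = a·d₂ + b·d₃ is isotropic then
(1−φ₁₃)|δ|² + 2 Re((Φ₁₃₂ − φ₂₃)δ) + φ₂₃(1−φ₁₂) = 0. -/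
theorem stmt9 (H : Matrix (Fin 3) (Fin 3) ℂ) (hH : Hᴴ = H)
    (hsig : ∃ P : Matrix (Fin 3) (Fin 3) ℂ, IsUnit P.det ∧
      Pᴴ * H * P = Matrix.diagonal ![1, 1, -1])
    (c d : Fin 3 → Fin 3 → ℂ)
    (hbasis : LinearIndependent ℂ c)
    (hunit : ∀ i, herm H (c i) (c i) = 1)
    (hd : ∀ i j, herm H (d i) (c j) = if i = j then 1 else 0)
    (a b : ℂ) (hb : b ≠ 0)
    (p₁ : Fin 3 → ℂ) (hp : p₁ = a • d 1 + b • d 2)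
    (hiso : herm H p₁ p₁ = 0) :
    (1 - Complex.normSq (herm H (c 0) (c 2))) *
        Complex.normSq (herm H (c 1) (c 2) * a / (herm H (c 1) (c 1) * b)) +
      2 * ((herm H (c 0) (c 2) * herm H (c 2) (c 1) * herm H (c 1) (c 0) -
            (Complex.normSq (herm H (c 1) (c 2)) : ℂ)) *
            (herm H (c 1) (c 2) * a / (herm H (c 1) (c 1) * b))).re +
      Complex.normSq (herm H (c 1) (c 2)) *
        (1 - Complex.normSq (herm H (c 0) (c 1))) = 0 :=
  stmt9_general H hH c d hunit hd a b hb p₁ hp hiso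
end

section
/- Let H be the Hermitian matrix with rows (1,b,0),(conj b,1,0),(0,0,|b|²−1) with b ∈ ℂ, |b| ≠ 1, b ≠ 0, and let p₁ = (−b, 1, e^{iθ₁}), p₂ = (1, −conj b, e^{iθ₂}) for real θ₁, θ₂. Then there exist unique (up to scalar of modulus 1 acting projectively trivially) α, β, γ ∈ ℂ such that the antiholomorphic map v ↦ M·conj(v), with M the matrix with rows (0,α,0),(β,0,0),(0,0,γ), satisfies M* H M-bar-compatibility (it is an anti-isometry of H, i.e. conj(Mᵀ) H M = conj(H) appropriately) and maps [p₁] to [p₂] projectively. -/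
/-!
The point condition forces `α = l`, `β = l` (its middle coordinate reads `β conj b = l conj b`,
and `b ≠ 0`) and `γ = l e^{iθ₁} e^{iθ₂}`, while the `(1,1)` entry of the anti-isometry equation
is `α conj α = 1`. Conversely every such matrix satisfies all three conditions. Hence the
solutions are exactly the unimodular multiples of `mat12 1 1 (e^{iθ₁} e^{iθ₂})`.
-/

open Matrix Complex

noncomputable def H12 (b : ℂ) : Matrix (Fin 3) (Fin 3) ℂ :=
  !![1, b, 0; (starRingEnd ℂ) b, 1, 0; 0, 0, ((Complex.normSq b - 1 : ℝ) : ℂ)]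

noncomputable def mat12 (α β γ : ℂ) : Matrix (Fin 3) (Fin 3) ℂ :=
  !![0, α, 0; β, 0, 0; 0, 0, γ]

open ComplexConjugate

lemma norm_eq_one_iff_mul_conj_eq_one {z : ℂ} : ‖z‖ = 1 ↔ z * conj z = 1 := by
  rw [mul_conj']
  norm_cast
  exact (pow_eq_one_iff_of_nonneg (norm_nonneg z) two_ne_zero).symm

lemma conj_apply_vec3 (x y z : ℂ) :
    (fun i => conj (![x, y, z] i)) = ![conj x, conj y, conj z] := by
  ext i; fin_cases i <;> rfl

lemma H12_map_conj (b : ℂ) :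
    (H12 b).map conj = !![1, conj b, 0; b, 1, 0; 0, 0, ((normSq b - 1 : ℝ) : ℂ)] := by
  ext i j; fin_cases i <;> fin_cases j <;> simp [H12]

lemma smul_mat12 (u α β γ : ℂ) : u • mat12 α β γ = mat12 (u * α) (u * β) (u * γ) := by
  ext i j; fin_cases i <;> fin_cases j <;> simp [mat12]

lemma mat12_transpose_mul_H12_mul_map_conj (b α β γ : ℂ) :
    (mat12 α β γ)ᵀ * H12 b * (mat12 α β γ).map conj =
      !![β * conj β, β * conj b * conj α, 0; α * b * conj β, α * conj α, 0;
        0, 0, γ * ((normSq b - 1 : ℝ) : ℂ) * conj γ] := by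
  ext i j; fin_cases i <;> fin_cases j <;> simp [mat12, H12, Matrix.mul_apply, Fin.sum_univ_three]

lemma mat12_mul_map_conj (α β γ : ℂ) :
    mat12 α β γ * (mat12 α β γ).map conj =
      !![α * conj β, 0, 0; 0, β * conj α, 0; 0, 0, γ * conj γ] := by
  ext i j; fin_cases i <;> fin_cases j <;> simp [mat12, Matrix.mul_apply, Fin.sum_univ_three]

lemma mat12_mulVec (α β γ x y z : ℂ) :
    mat12 α β γ *ᵥ ![x, y, z] = ![α * y, β * x, γ * z] := by
  ext i; fin_cases i <;> simp [mat12, Matrix.mulVec, dotProduct, Fin.sum_univ_three]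

def IsLagrangianReflection12 (b : ℂ) (θ₁ θ₂ : ℝ) (M : Matrix (Fin 3) (Fin 3) ℂ) : Prop :=
  Mᵀ * H12 b * M.map conj = (H12 b).map conj ∧ M * M.map conj = 1 ∧
    ∃ l : ℂ, l ≠ 0 ∧
      M *ᵥ (fun i => conj (![-b, 1, exp (θ₁ * I)] i)) = l • ![1, -conj b, exp (θ₂ * I)]

lemma isLagrangianReflection12_mat12_iff {b : ℂ} (hb : b ≠ 0) (θ₁ θ₂ : ℝ) (α β γ : ℂ) :
    IsLagrangianReflection12 b θ₁ θ₂ (mat12 α β γ) ↔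
      ‖α‖ = 1 ∧ β = α ∧ γ = α * exp (θ₁ * I) * exp (θ₂ * I) := by
  have hθ₁ := norm_eq_one_iff_mul_conj_eq_one.1 (norm_exp_ofReal_mul_I θ₁)
  simp only [IsLagrangianReflection12, mat12_transpose_mul_H12_mul_map_conj, mat12_mul_map_conj,
    H12_map_conj, conj_apply_vec3, mat12_mulVec]
  constructor
  · rintro ⟨hiso, -, l, -, hpt⟩
    have hα : α * conj α = 1 := by simpa using congrFun (congrFun hiso 1) 1
    have h₀ : α = l := by simpa using congrFun hpt 0
    have h₁ : β = l := by simpa [hb] using congrFun hpt 1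
    have h₂ : γ * conj (exp (θ₁ * I)) = l * exp (θ₂ * I) := by simpa using congrFun hpt 2
    refine ⟨norm_eq_one_iff_mul_conj_eq_one.2 hα, h₁.trans h₀.symm, ?_⟩
    linear_combination exp (θ₁ * I) * h₂ - γ * hθ₁ - exp (θ₁ * I) * exp (θ₂ * I) * h₀
  · rintro ⟨hα, hβ, hγ⟩
    subst β
    have hα₀ : α ≠ 0 := norm_ne_zero_iff.1 (by simp [hα])
    have hγ₁ : ‖γ‖ = 1 := by simp [hγ, hα]
    rw [norm_eq_one_iff_mul_conj_eq_one] at hα hγ₁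
    refine ⟨?_, ?_, α, hα₀, ?_⟩
    · ext i j; fin_cases i <;> fin_cases j <;> simp
      exacts [hα, by linear_combination conj b * hα, by linear_combination b * hα, hα,
        by linear_combination ((normSq b : ℂ) - 1) * hγ₁]
    · ext i j; fin_cases i <;> fin_cases j <;> simp [hα, hγ₁]
    · ext i; fin_cases i <;> simp
      linear_combination conj (exp (θ₁ * I)) * hγ + α * exp (θ₂ * I) * hθ₁

theorem stmt12_general (b : ℂ) (hb : b ≠ 0) (θ₁ θ₂ : ℝ) :
    (∃ α β γ : ℂ,
      (mat12 α β γ)ᵀ * H12 b * (mat12 α β γ).map (starRingEnd ℂ) =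
          (H12 b).map (starRingEnd ℂ) ∧
      mat12 α β γ * (mat12 α β γ).map (starRingEnd ℂ) = 1 ∧
      ∃ l : ℂ, l ≠ 0 ∧
        (mat12 α β γ).mulVec (fun i => (starRingEnd ℂ) (![-b, 1, Complex.exp (θ₁ * Complex.I)] i)) =
          l • ![1, -(starRingEnd ℂ) b, Complex.exp (θ₂ * Complex.I)]) ∧
    (∀ α β γ α' β' γ' : ℂ,
      ((mat12 α β γ)ᵀ * H12 b * (mat12 α β γ).map (starRingEnd ℂ) =
          (H12 b).map (starRingEnd ℂ) ∧
        mat12 α β γ * (mat12 α β γ).map (starRingEnd ℂ) = 1 ∧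
        ∃ l : ℂ, l ≠ 0 ∧
          (mat12 α β γ).mulVec (fun i => (starRingEnd ℂ) (![-b, 1, Complex.exp (θ₁ * Complex.I)] i)) =
            l • ![1, -(starRingEnd ℂ) b, Complex.exp (θ₂ * Complex.I)]) →
      ((mat12 α' β' γ')ᵀ * H12 b * (mat12 α' β' γ').map (starRingEnd ℂ) =
          (H12 b).map (starRingEnd ℂ) ∧
        mat12 α' β' γ' * (mat12 α' β' γ').map (starRingEnd ℂ) = 1 ∧
        ∃ l : ℂ, l ≠ 0 ∧
          (mat12 α' β' γ').mulVec (fun i => (starRingEnd ℂ) (![-b, 1, Complex.exp (θ₁ * Complex.I)] i)) =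
            l • ![1, -(starRingEnd ℂ) b, Complex.exp (θ₂ * Complex.I)]) →
      ∃ u : ℂ, ‖u‖ = 1 ∧ mat12 α' β' γ' = u • mat12 α β γ) := by
  have key := isLagrangianReflection12_mat12_iff hb θ₁ θ₂
  refine ⟨⟨1, 1, _, (key 1 1 _).2 ⟨norm_one, rfl, rfl⟩⟩, ?_⟩
  intro α β γ α' β' γ' h h'
  obtain ⟨hα, hβ, hγ⟩ := (key α β γ).1 h
  obtain ⟨hα', hβ', hγ'⟩ := (key α' β' γ').1 h'
  subst β γ β' γ'
  refine ⟨α' * conj α, by simp [hα, hα'], ?_⟩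
  have hu : α' * conj α * α = α' := by
    linear_combination α' * norm_eq_one_iff_mul_conj_eq_one.1 hα
  simp only [smul_mat12, ← mul_assoc, hu]

/-- The antiholomorphic map v ↦ M·conj(v) determined by M = !![0,α,0;β,0,0;0,0,γ]
which is an anti-isometry of H, an involution, and maps [p₁] to [p₂], exists and is
unique up to a unimodular scalar. -/
theorem stmt12 (b : ℂ) (hb : b ≠ 0) (hb1 : ‖b‖ ≠ 1) (θ₁ θ₂ : ℝ) :
    (∃ α β γ : ℂ,
      (mat12 α β γ)ᵀ * H12 b * (mat12 α β γ).map (starRingEnd ℂ) =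
          (H12 b).map (starRingEnd ℂ) ∧
      mat12 α β γ * (mat12 α β γ).map (starRingEnd ℂ) = 1 ∧
      ∃ l : ℂ, l ≠ 0 ∧
        (mat12 α β γ).mulVec (fun i => (starRingEnd ℂ) (![-b, 1, Complex.exp (θ₁ * Complex.I)] i)) =
          l • ![1, -(starRingEnd ℂ) b, Complex.exp (θ₂ * Complex.I)]) ∧
    (∀ α β γ α' β' γ' : ℂ,
      ((mat12 α β γ)ᵀ * H12 b * (mat12 α β γ).map (starRingEnd ℂ) =
          (H12 b).map (starRingEnd ℂ) ∧
        mat12 α β γ * (mat12 α β γ).map (starRingEnd ℂ) = 1 ∧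
        ∃ l : ℂ, l ≠ 0 ∧
          (mat12 α β γ).mulVec (fun i => (starRingEnd ℂ) (![-b, 1, Complex.exp (θ₁ * Complex.I)] i)) =
            l • ![1, -(starRingEnd ℂ) b, Complex.exp (θ₂ * Complex.I)]) →
      ((mat12 α' β' γ')ᵀ * H12 b * (mat12 α' β' γ').map (starRingEnd ℂ) =
          (H12 b).map (starRingEnd ℂ) ∧
        mat12 α' β' γ' * (mat12 α' β' γ').map (starRingEnd ℂ) = 1 ∧
        ∃ l : ℂ, l ≠ 0 ∧
          (mat12 α' β' γ').mulVec (fun i => (starRingEnd ℂ) (![-b, 1, Complex.exp (θ₁ * Complex.I)] i)) =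
            l • ![1, -(starRingEnd ℂ) b, Complex.exp (θ₂ * Complex.I)]) →
      ∃ u : ℂ, ‖u‖ = 1 ∧ mat12 α' β' γ' = u • mat12 α β γ) :=
  stmt12_general b hb θ₁ θ₂
end

section
/- Given a flag and a complex line in generic position, represented by p₁ = (1,0,0)ᵀ, c₁ = (0,1,0)ᵀ and a polar vector c₂ = (a,b,1)ᵀ with b ≠ 0 and |b|² + 2Re(a) > 0 (for the form J), there exists g in the stabilizer of the standard flag (matrices [[λ,0,itλ],[0,conj(λ)/λ,0],[0,0,1/conj(λ)]], λ≠0, t∈ℝ) such that g·c₂ is proportional to (a', √2, 1)ᵀ with a' real, a' > −1; moreover the solutions (λ,t) are exactly three, given by t = −Im(a) and the three solutions λ of conj(λ)²·b = √2·λ, and a' satisfies (1+a')⁻¹ = φ(C₁,C₂) = |⟨c₁,c₂⟩|²/(⟨c₁,c₁⟩⟨c₂,c₂⟩) = |b|²/(|b|²+2Re(a)). -/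
/-!
Taking norms in `conj(λ)² b = r λ` gives `|λ|² |b|² = r²`, and multiplying the equation by `λ²`
turns it into `λ³ = r³ b / |b|⁴`; conversely every cube root of that number has the right modulus,
so the solutions are exactly the three cube roots of a nonzero number.
Applying `Tmat λ t` to `(a, b, 1)` and rescaling by `conj λ` gives `(|λ|² (a + i t), conj(λ)² b / λ, 1)`.
Once `|λ|² = 2 / |b|²`, the first entry is real exactly when `t = -Im a`, and it is then
`a' = 2 Re a / |b|²`, for which `(1 + a')⁻¹ = |b|² / (|b|² + 2 Re a)`.
-/

open Matrix Complex

noncomputable def Tmat (l : ℂ) (t : ℝ) : Matrix (Fin 3) (Fin 3) ℂ :=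
  !![l, 0, Complex.I * t * l;
     0, (starRingEnd ℂ) l / l, 0;
     0, 0, 1 / (starRingEnd ℂ) l]

theorem Complex.ncard_setOf_pow_eq {n : ℕ} (hn : 0 < n) {c : ℂ} (hc : c ≠ 0) :
    {z : ℂ | z ^ n = c}.ncard = n := by
  classical
  have hζ := Complex.isPrimitiveRoot_exp n hn.ne'
  have hset : {z : ℂ | z ^ n = c} = ↑(Polynomial.nthRootsFinset n c) := by
    ext z
    simp [Polynomial.mem_nthRootsFinset hn]
  rw [hset, Set.ncard_coe_finset, Polynomial.nthRootsFinset_def,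
    ← Multiset.toFinset_eq (hζ.nthRoots_nodup hc), Finset.card_mk, hζ.card_nthRoots,
    if_pos (IsAlgClosed.exists_pow_nat_eq c hn)]

section ConjSqEquation

variable {b l : ℂ} {r : ℝ}

theorem normSq_mul_normSq_eq_sq_of_conj_sq_mul_eq (hl : l ≠ 0)
    (h : (starRingEnd ℂ) l ^ 2 * b = r * l) : normSq l * normSq b = r ^ 2 := by
  have h' := congrArg normSq h
  simp only [map_mul, map_pow, normSq_conj, normSq_ofReal] at h'
  exact mul_left_cancel₀ (normSq_eq_zero.not.mpr hl) (by linear_combination h')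

theorem normSq_mul_normSq_eq_sq_of_pow_three_eq (hb : b ≠ 0)
    (h : l ^ 3 = r ^ 3 * b / (normSq b : ℂ) ^ 2) : normSq l * normSq b = r ^ 2 := by
  have hb' : 0 < normSq b := normSq_pos.mpr hb
  have h' := congrArg normSq h
  simp only [map_div₀, map_mul, map_pow, normSq_ofReal] at h'
  refine (pow_left_inj₀ (mul_nonneg (normSq_nonneg l) hb'.le) (sq_nonneg r) three_ne_zero).mp ?_
  field_simp at h'
  linear_combination h'

theorem sq_mul_conj_sq_mul_eq_of_normSq_mul_normSq_eq (hb : b ≠ 0)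
    (h : normSq l * normSq b = r ^ 2) :
    l ^ 2 * ((starRingEnd ℂ) l ^ 2 * b) = r ^ 4 * b / (normSq b : ℂ) ^ 2 := by
  have h' : (normSq l : ℂ) * normSq b = r ^ 2 := by exact_mod_cast h
  rw [eq_div_iff (by simp [hb])]
  linear_combination (l * (starRingEnd ℂ) l + normSq l) * (normSq b : ℂ) ^ 2 * b * mul_conj l
    + ((normSq l : ℂ) * normSq b + r ^ 2) * b * h'

theorem conj_sq_mul_eq_iff_pow_three_eq (hb : b ≠ 0) (hr : r ≠ 0) :
    l ≠ 0 ∧ (starRingEnd ℂ) l ^ 2 * b = r * l ↔ l ^ 3 = r ^ 3 * b / (normSq b : ℂ) ^ 2 := by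
  constructor
  · rintro ⟨hl, h⟩
    have key := sq_mul_conj_sq_mul_eq_of_normSq_mul_normSq_eq hb
      (normSq_mul_normSq_eq_sq_of_conj_sq_mul_eq hl h)
    rw [h] at key
    refine mul_left_cancel₀ (ofReal_ne_zero.mpr hr) ?_
    linear_combination key
  · intro h
    have hl : l ≠ 0 := by
      rintro rfl
      rw [zero_pow three_ne_zero, eq_comm] at h
      simp [hb, hr] at h
    have key := sq_mul_conj_sq_mul_eq_of_normSq_mul_normSq_eq hb
      (normSq_mul_normSq_eq_sq_of_pow_three_eq hb h)
    refine ⟨hl, mul_left_cancel₀ (pow_ne_zero 2 hl) ?_⟩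
    linear_combination key - r * h

theorem ncard_setOf_conj_sq_mul_eq (hb : b ≠ 0) (hr : r ≠ 0) :
    {l : ℂ | l ≠ 0 ∧ (starRingEnd ℂ) l ^ 2 * b = r * l}.ncard = 3 := by
  simp_rw [conj_sq_mul_eq_iff_pow_three_eq hb hr]
  exact Complex.ncard_setOf_pow_eq three_pos (by simp [hb, hr])

end ConjSqEquation

theorem Tmat_mulVec (l a b : ℂ) (t : ℝ) :
    Tmat l t *ᵥ ![a, b, 1] =
      ![l * (a + I * t), (starRingEnd ℂ) l / l * b, ((starRingEnd ℂ) l)⁻¹] := by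
  ext i
  fin_cases i <;> simp [Tmat, mulVec, dotProduct, Fin.sum_univ_three]; ring

theorem exists_Tmat_mulVec_eq_smul_iff {l : ℂ} (hl : l ≠ 0) (a b x y : ℂ) (t : ℝ) :
    (∃ k : ℂ, k ≠ 0 ∧ Tmat l t *ᵥ ![a, b, 1] = k • ![x, y, 1]) ↔
      (normSq l : ℂ) * (a + I * t) = x ∧ (starRingEnd ℂ) l ^ 2 * b = y * l := by
  have hl' : (starRingEnd ℂ) l ≠ 0 := (map_ne_zero _).mpr hl
  have coord0 : l * (a + I * t) = ((starRingEnd ℂ) l)⁻¹ * x ↔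
      (normSq l : ℂ) * (a + I * t) = x := by
    rw [eq_inv_mul_iff_mul_eq₀ hl', ← mul_conj]
    ring_nf
  have coord1 : (starRingEnd ℂ) l / l * b = ((starRingEnd ℂ) l)⁻¹ * y ↔
      (starRingEnd ℂ) l ^ 2 * b = y * l := by
    rw [eq_inv_mul_iff_mul_eq₀ hl', ← div_eq_iff hl]
    ring_nf
  simp [Tmat_mulVec, funext_iff, Fin.forall_fin_succ, hl, coord0, coord1]

/-- Normalization to standard position: there is a real parameter a' > −1 with
(1+a')⁻¹ = φ(C₁,C₂), and an element of the stabilizer of the standard flag sends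
c₂ = (a,b,1) to a multiple of (a',√2,1) exactly when t = −Im a and conj(λ)²b = √2 λ;
the latter equation has exactly three nonzero solutions λ. -/
theorem stmt19 (a b : ℂ) (hb : b ≠ 0) (hpos : 0 < Complex.normSq b + 2 * a.re) :
    ∃ a' : ℝ, -1 < a' ∧
      (1 + a')⁻¹ = Complex.normSq b / (Complex.normSq b + 2 * a.re) ∧
      ({l : ℂ | l ≠ 0 ∧ ((starRingEnd ℂ) l) ^ 2 * b = (Real.sqrt 2 : ℂ) * l}).ncard = 3 ∧
      (∀ l : ℂ, l ≠ 0 → ∀ t : ℝ,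
        ((∃ k : ℂ, k ≠ 0 ∧
            (Tmat l t).mulVec ![a, b, 1] = k • ![(a' : ℂ), (Real.sqrt 2 : ℂ), 1]) ↔
          (t = -a.im ∧ ((starRingEnd ℂ) l) ^ 2 * b = (Real.sqrt 2 : ℂ) * l))) := by
  have hnb : 0 < normSq b := normSq_pos.mpr hb
  refine ⟨2 * a.re / normSq b, ?_, ?_, ncard_setOf_conj_sq_mul_eq hb (by positivity), ?_⟩
  · rw [lt_div_iff₀ hnb]
    linarith
  · field_simp
  · intro l hl t
    rw [exists_Tmat_mulVec_eq_smul_iff hl]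
    refine and_congr_left fun h => ?_
    have hN := normSq_mul_normSq_eq_sq_of_conj_sq_mul_eq hl h
    rw [Real.sq_sqrt zero_le_two] at hN
    have hre : normSq l * a.re = 2 * a.re / normSq b := by
      rw [eq_div_iff hnb.ne', ← hN]
      ring
    simp [Complex.ext_iff, hre, hl, eq_neg_iff_add_eq_zero, add_comm]
end
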